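/- arXiv:2410.07844 — 5 statements merged into one kernel-verified Lean document; each statement's English description precedes it below -/
import Mathlib

section
/- With the (α,β)-score function sc on finite subsets of a color set C, for any collection 𝒫 of finite subsets of C and any X, Y ⊆ C, one has sc_X(𝒫[Y]) = sc_Y(𝒫[X ∪ Y]) · (αf)^{|X| - |Y|}, where 𝒫[Y] = {P ∈ 𝒫 : Y ⊆ P}. -/
open Finset

/-- The `(α,β)`-score of a color set `P` relative to `J`:
`β (αf)^{-|P \ J|}` if `J ⊆ P`, else `0`. -/
noncomputable def sc {C : Type*} [DecidableEq C] (α β : ℝ) (f : ℕ) (J P : Finset C) : ℝ :=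
  if J ⊆ P then β * (α * (f : ℝ)) ^ (-(((P \ J).card : ℤ))) else 0

/-- The score of a collection: sum of scores of its members. -/
noncomputable def scSum {C : Type*} [DecidableEq C] (α β : ℝ) (f : ℕ)
    (J : Finset C) (Ps : Finset (Finset C)) : ℝ :=
  ∑ P ∈ Ps, sc α β f J P

/-- The `J`-link of a collection: members containing `J`. -/
def link {C : Type*} [DecidableEq C] (Ps : Finset (Finset C)) (J : Finset C) :
    Finset (Finset C) :=
  Ps.filter (fun P => J ⊆ P)

/-- A park: every relative score is at most `1`. -/
def IsPark {C : Type*} [DecidableEq C] (α β : ℝ) (f : ℕ) (Ps : Finset (Finset C)) : Prop :=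
  ∀ J : Finset C, scSum α β f J Ps ≤ 1

section Score

variable {C : Type*} [DecidableEq C] {α β : ℝ} {f : ℕ}

theorem sc_eq_zero_of_not_subset {J P : Finset C} (h : ¬J ⊆ P) : sc α β f J P = 0 :=
  if_neg h

theorem sc_eq_sc_mul_zpow (hαf : α * (f : ℝ) ≠ 0) {X Y P : Finset C} (hXY : X ∪ Y ⊆ P) :
    sc α β f X P = sc α β f Y P * (α * (f : ℝ)) ^ ((X.card : ℤ) - (Y.card : ℤ)) := by
  have hX : X ⊆ P := subset_union_left.trans hXY
  have hY : Y ⊆ P := subset_union_right.trans hXY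
  have hexp : -((P \ X).card : ℤ) = -((P \ Y).card : ℤ) + ((X.card : ℤ) - Y.card) := by
    rw [cast_card_sdiff hX, cast_card_sdiff hY]
    ring
  rw [sc, sc, if_pos hX, if_pos hY, mul_assoc, ← zpow_add₀ hαf, hexp]

theorem scSum_link_eq_scSum_link_union (Ps : Finset (Finset C)) (X Y : Finset C) :
    scSum α β f X (link Ps Y) = scSum α β f X (link Ps (X ∪ Y)) := by
  simp only [scSum, link, sum_filter]
  refine sum_congr rfl fun P _ => ?_
  by_cases hX : X ⊆ P
  · simp only [union_subset_iff, hX, true_and]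
  · simp only [sc_eq_zero_of_not_subset hX, ite_self]

end Score

theorem score_transition_general {C : Type*} [DecidableEq C] (α β : ℝ) (f : ℕ)
    (hf : 0 < f) (hα : 1 < α)
    (Ps : Finset (Finset C)) (X Y : Finset C) :
    scSum α β f X (link Ps Y) =
      scSum α β f Y (link Ps (X ∪ Y)) * (α * (f : ℝ)) ^ ((X.card : ℤ) - (Y.card : ℤ)) := by
  have hαf : α * (f : ℝ) ≠ 0 := by positivity
  rw [scSum_link_eq_scSum_link_union, scSum, scSum, sum_mul]
  exact sum_congr rfl fun P hP => sc_eq_sc_mul_zpow hαf (mem_filter.mp hP).2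

/-- Score transition between links. -/
theorem score_transition {C : Type*} [DecidableEq C] (α β : ℝ) (f : ℕ)
    (hf : 0 < f) (hα : 1 < α) (hβ0 : 0 < β) (hβ1 : β ≤ 1)
    (Ps : Finset (Finset C)) (X Y : Finset C) :
    scSum α β f X (link Ps Y) =
      scSum α β f Y (link Ps (X ∪ Y)) * (α * (f : ℝ)) ^ ((X.card : ℤ) - (Y.card : ℤ)) :=
  score_transition_general α β f hf hα Ps X Y
end

section
/- Let X = {(P_j, F_j)}_{j=1}^{m} be a family of pairs of finite sets over a universe C with |P_j| ≤ k and |F_j| ≤ f for all j, such that P_j ∩ F_j = ∅ for all j, and P_j ∩ F_{j'} ≠ ∅ whenever j < j'. Then m ≤ binom(f+k, k). -/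
open Finset

open ExteriorAlgebra


lemma fin_append_comp {α β : Type*} {k f : ℕ} (g : α → β) (a : Fin k → α) (b : Fin f → α) :
    (fun i => g (Fin.append a b i)) = Fin.append (fun i => g (a i)) (fun i => g (b i)) := by
  funext i
  refine Fin.addCases (fun i => ?_) (fun i => ?_) i <;>
    simp [Fin.append_left, Fin.append_right]

lemma iMulti_mul {K M : Type*} [CommRing K] [AddCommGroup M] [Module K M]
    (k f : ℕ) (a : Fin k → M) (b : Fin f → M) :
    ιMulti K k a * ιMulti K f b = ιMulti K (k + f) (Fin.append a b) := by
  rw [ιMulti_apply, ιMulti_apply, ιMulti_apply, ← List.prod_append, ← List.ofFn_fin_append]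
  congr 1
  exact congrArg List.ofFn (fin_append_comp (ι K) a b).symm

noncomputable def detF (K : Type*) [CommRing K] (n : ℕ) :
    ∀ i, ((Fin n → K) [⋀^Fin i]→ₗ[K] K) :=
  fun i => if h : i = n then h ▸ (Matrix.detRowAlternating (n := Fin n) (R := K)) else 0

lemma detF_apply {K : Type*} [CommRing K] (n : ℕ) (v : Fin n → (Fin n → K)) :
    liftAlternating (detF K n) (ιMulti K n v) = Matrix.detRowAlternating v := by
  rw [liftAlternating_apply_ιMulti]
  simp [detF]

noncomputable def wedgeSet (K : Type*) [Field K] (n k : ℕ) :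
    Finset (ExteriorAlgebra K (Fin n → K)) :=
  letI := Classical.decEq (ExteriorAlgebra K (Fin n → K))
  (Finset.powersetCard k (Finset.univ : Finset (Fin n))).attach.image
    (fun s => ιMulti K k (fun i =>
      (Pi.single (s.1.orderEmbOfFin (Finset.mem_powersetCard.mp s.2).2 i) 1 : Fin n → K)))

lemma wedgeSet_card_le (K : Type*) [Field K] (n k : ℕ) :
    (wedgeSet K n k).card ≤ Nat.choose n k := by
  classical
  unfold wedgeSet
  refine (Finset.card_image_le).trans ?_
  rw [Finset.card_attach, Finset.card_powersetCard, Finset.card_univ, Fintype.card_fin]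

lemma wedge_mem_span {K : Type*} [Field K] (n k : ℕ) (v : Fin k → (Fin n → K)) :
    ιMulti K k v ∈ Submodule.span K ((wedgeSet K n k : Finset _) : Set _) := by
  classical
  have hv : v = fun i => ∑ j : Fin n, v i j • (Pi.single j 1 : Fin n → K) := by
    funext i
    rw [show (fun j : Fin n => v i j • (Pi.single j 1 : Fin n → K))
          = fun j => Pi.single j (v i j) from funext fun j => by
        rw [← Pi.single_smul, smul_eq_mul, mul_one]]
    rw [Finset.univ_sum_single (v i)]
  rw [hv]
  rw [show (ιMulti K k (M := Fin n → K)) (fun i => ∑ j : Fin n, v i j • (Pi.single j 1 : Fin n → K))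
      = ∑ r : Fin k → Fin n, (ιMulti K k (M := Fin n → K)).toMultilinearMap
          (fun i => v i (r i) • (Pi.single (r i) 1 : Fin n → K)) from
    MultilinearMap.map_sum _ _]
  refine Submodule.sum_mem _ (fun r _ => ?_)
  rw [MultilinearMap.map_smul_univ]
  refine Submodule.smul_mem _ _ ?_
  by_cases hr : Function.Injective r
  · set s : Finset (Fin n) := Finset.image r Finset.univ with hsdef
    have hs : s.card = k := by
      rw [hsdef, Finset.card_image_of_injective _ hr, Finset.card_univ, Fintype.card_fin]
    have hmem : s ∈ Finset.powersetCard k (Finset.univ : Finset (Fin n)) :=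
      Finset.mem_powersetCard.mpr ⟨Finset.subset_univ _, hs⟩
    set σ := s.orderEmbOfFin hs with hσdef
    have hex : ∀ i, ∃ j, σ j = r i := by
      intro i
      have hri : r i ∈ s := Finset.mem_image_of_mem _ (Finset.mem_univ i)
      have hrange := Finset.range_orderEmbOfFin s hs
      have : r i ∈ Set.range σ := by rw [hrange]; exact hri
      exact this
    choose π hπ using hex
    have hπinj : Function.Injective π := fun a b hab =>
      hr (by rw [← hπ a, ← hπ b, hab])
    have hbij : Function.Bijective π := Finite.injective_iff_bijective.mp hπinj
    set πe : Equiv.Perm (Fin k) := Equiv.ofBijective π hbij with hπe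
    have heq : (fun i => (Pi.single (r i) 1 : Fin n → K))
        = (fun i => (Pi.single (σ i) 1 : Fin n → K)) ∘ πe := by
      funext i
      simp only [Function.comp_apply, hπe, Equiv.ofBijective_apply, hπ i]
    show ιMulti K k (fun i => (Pi.single (r i) 1 : Fin n → K)) ∈ _
    rw [heq, AlternatingMap.map_perm]
    have helem : ιMulti K k (fun i => (Pi.single (σ i) 1 : Fin n → K)) ∈ wedgeSet K n k := by
      refine Finset.mem_image.mpr ⟨⟨s, hmem⟩, Finset.mem_attach _ _, rfl⟩
    have hspan := Submodule.subset_span (R := K) helem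
    rcases Int.units_eq_one_or (Equiv.Perm.sign πe) with h1 | h1 <;> rw [h1] <;>
      simpa using hspan
  · obtain ⟨a, b, hab, hne⟩ := Function.not_injective_iff.mp hr
    show ιMulti K k (fun i => (Pi.single (r i) 1 : Fin n → K)) ∈ _
    rw [AlternatingMap.map_eq_zero_of_eq _ _ (by rw [hab]) hne]
    exact Submodule.zero_mem _


theorem skew_exact {C : Type*} [DecidableEq C] (f k m : ℕ)
    (P F : Fin m → Finset C)
    (hP : ∀ j, (P j).card = k) (hF : ∀ j, (F j).card = f)
    (hdisj : ∀ j, P j ∩ F j = ∅)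
    (hskew : ∀ j j' : Fin m, j < j' → (P j ∩ F j').Nonempty) :
    m ≤ Nat.choose (f + k) k := by
  classical
  set U : Finset C := Finset.univ.biUnion (fun j => P j ∪ F j) with hU
  set t : C → ℚ := fun c => if h : c ∈ U then (((U.equivFin ⟨c, h⟩ : Fin U.card) : ℕ) : ℚ) else 0
    with ht
  have htinj : ∀ a ∈ U, ∀ b ∈ U, t a = t b → a = b := by
    intro a ha b hb hab
    simp only [ht, dif_pos ha, dif_pos hb, Nat.cast_inj] at hab
    have := U.equivFin.injective (Fin.val_injective hab)
    exact Subtype.ext_iff.mp this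
  set v : C → (Fin (k + f) → ℚ) := fun c l => (t c) ^ (l : ℕ) with hv
  set pe : Fin m → Fin k → C :=
    fun j i => ((P j).equivFin.symm ((finCongr (hP j)).symm i) : C) with hpe
  set fe : Fin m → Fin f → C :=
    fun j i => ((F j).equivFin.symm ((finCongr (hF j)).symm i) : C) with hfe
  have hpe_mem : ∀ j i, pe j i ∈ P j := fun j i => Subtype.prop _
  have hfe_mem : ∀ j i, fe j i ∈ F j := fun j i => Subtype.prop _
  have hpe_inj : ∀ j, Function.Injective (pe j) := fun j a b hab => by
    simpa using (finCongr (hP j)).symm.injective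
      ((P j).equivFin.symm.injective (Subtype.ext hab))
  have hfe_inj : ∀ j, Function.Injective (fe j) := fun j a b hab => by
    simpa using (finCongr (hF j)).symm.injective
      ((F j).equivFin.symm.injective (Subtype.ext hab))
  have hpe_surj : ∀ j, ∀ c ∈ P j, ∃ i, pe j i = c := by
    intro j c hc
    exact ⟨finCongr (hP j) ((P j).equivFin ⟨c, hc⟩), by simp [hpe]⟩
  have hfe_surj : ∀ j, ∀ c ∈ F j, ∃ i, fe j i = c := by
    intro j c hc
    exact ⟨finCongr (hF j) ((F j).equivFin ⟨c, hc⟩), by simp [hfe]⟩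
  set x : Fin m → ExteriorAlgebra ℚ (Fin (k + f) → ℚ) :=
    fun j => ιMulti ℚ k (fun i => v (pe j i)) with hx
  set y : Fin m → ExteriorAlgebra ℚ (Fin (k + f) → ℚ) :=
    fun j => ιMulti ℚ f (fun i => v (fe j i)) with hy
  have hxy : ∀ j j', x j * y j'
      = ιMulti ℚ (k + f) (fun i => v (Fin.append (pe j) (fe j') i)) := by
    intro j j'
    rw [hx, hy, iMulti_mul, fin_append_comp]
  -- vanishing above the diagonal
  have hvan : ∀ j j', j < j' → x j * y j' = 0 := by
    intro j j' hlt
    obtain ⟨c, hc⟩ := hskew j j' hlt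
    rw [Finset.mem_inter] at hc
    obtain ⟨i₁, hi₁⟩ := hpe_surj j c hc.1
    obtain ⟨i₂, hi₂⟩ := hfe_surj j' c hc.2
    rw [hxy]
    refine AlternatingMap.map_eq_zero_of_eq _ _
      (i := Fin.castAdd f i₁) (j := Fin.natAdd k i₂) ?_ ?_
    · rw [Fin.append_left, Fin.append_right, hi₁, hi₂]
    · intro hcon
      have := congrArg Fin.val hcon
      simp only [Fin.coe_castAdd, Fin.coe_natAdd] at this
      omega
  -- nonvanishing on the diagonal
  have hdiag : ∀ j, liftAlternating (detF ℚ (k + f)) (x j * y j) ≠ 0 := by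
    intro j
    rw [hxy, detF_apply]
    set τ : Fin (k + f) → C := Fin.append (pe j) (fe j) with hτ
    have hτmem : ∀ i, τ i ∈ U := by
      intro i
      refine Finset.mem_biUnion.mpr ⟨j, Finset.mem_univ j, ?_⟩
      refine Fin.addCases (fun i => ?_) (fun i => ?_) i <;>
        simp [hτ, Fin.append_left, Fin.append_right, Finset.mem_union, hpe_mem, hfe_mem]
    have hdj : ∀ c, c ∈ P j → c ∈ F j → False := by
      intro c h1 h2
      have : c ∈ P j ∩ F j := Finset.mem_inter.mpr ⟨h1, h2⟩
      rw [hdisj j] at this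
      exact absurd this (Finset.notMem_empty c)
    have hτinj : Function.Injective τ := by
      intro a b
      refine Fin.addCases (fun a1 => ?_) (fun a1 => ?_) a <;>
        refine Fin.addCases (fun b1 => ?_) (fun b1 => ?_) b <;>
          intro hab <;> simp only [hτ, Fin.append_left, Fin.append_right] at hab
      · exact congrArg (Fin.castAdd f) (hpe_inj j hab)
      · exact (hdj _ (hpe_mem j a1) (by rw [hab]; exact hfe_mem j b1)).elim
      · exact (hdj (pe j b1) (hpe_mem j b1) (by rw [← hab]; exact hfe_mem j a1)).elim
      · exact congrArg (Fin.natAdd k) (hfe_inj j hab)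
    have hmat : (fun i => v (τ i)) = Matrix.vandermonde (fun i => t (τ i)) := by
      funext i l
      simp [hv, Matrix.vandermonde]
    rw [hmat]
    show (Matrix.vandermonde fun i => t (τ i)).det ≠ 0
    rw [Matrix.det_vandermonde]
    refine Finset.prod_ne_zero_iff.mpr fun i _ => Finset.prod_ne_zero_iff.mpr fun l hl => ?_
    refine sub_ne_zero.mpr fun heq => ?_
    have h1 : τ l = τ i := htinj _ (hτmem l) _ (hτmem i) heq
    exact (Finset.mem_Ioi.mp hl).ne' (hτinj h1)
  -- linear independence of the x's
  have hli : LinearIndependent ℚ x := by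
    rw [Fintype.linearIndependent_iff]
    intro g hg
    by_contra hcon
    push_neg at hcon
    obtain ⟨j, hj⟩ := hcon
    set T := Finset.univ.filter (fun i => g i ≠ 0) with hT
    have hTne : T.Nonempty := ⟨j, by simp [hT, hj]⟩
    set j₀ := T.max' hTne with hj₀
    have hj₀ne : g j₀ ≠ 0 := (Finset.mem_filter.mp (T.max'_mem hTne)).2
    have happ := congrArg (fun z => liftAlternating (detF ℚ (k + f)) (z * y j₀)) hg
    simp only [Finset.sum_mul, smul_mul_assoc, map_sum, map_smul, zero_mul, map_zero] at happ
    rw [Finset.sum_eq_single j₀] at happ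
    · exact hj₀ne ((smul_eq_zero.mp happ).resolve_right (hdiag j₀))
    · intro b _ hb
      rcases lt_or_gt_of_ne hb with hblt | hbgt
      · rw [hvan b j₀ hblt, map_zero, smul_zero]
      · have : g b = 0 := by
          by_contra hgb
          exact absurd (T.le_max' b (Finset.mem_filter.mpr ⟨Finset.mem_univ b, hgb⟩))
            (not_le.mpr hbgt)
        rw [this, zero_smul]
    · intro h
      exact absurd (Finset.mem_univ j₀) h
  -- conclude by dimension count
  have hxW : ∀ j, x j ∈ Submodule.span ℚ
      ((wedgeSet ℚ (k + f) k : Finset (ExteriorAlgebra ℚ (Fin (k + f) → ℚ))) :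
        Set (ExteriorAlgebra ℚ (Fin (k + f) → ℚ))) :=
    fun j => wedge_mem_span (k + f) k _
  set W := Submodule.span ℚ
      ((wedgeSet ℚ (k + f) k : Finset (ExteriorAlgebra ℚ (Fin (k + f) → ℚ))) :
        Set (ExteriorAlgebra ℚ (Fin (k + f) → ℚ))) with hW
  have hliW : LinearIndependent ℚ (fun j => (⟨x j, hxW j⟩ : W)) :=
    LinearIndependent.of_comp W.subtype hli
  have hcard := hliW.fintype_card_le_finrank
  rw [Fintype.card_fin] at hcard
  have h2 : Module.finrank ℚ W ≤ (wedgeSet ℚ (k + f) k).card :=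
    finrank_span_finset_le_card _
  have h3 := wedgeSet_card_le ℚ (k + f) k
  have : m ≤ Nat.choose (k + f) k := le_trans hcard (le_trans h2 h3)
  rwa [Nat.add_comm k f] at this

/-- Skew Bollobás set-pair inequality. -/
theorem skew_bollobas {C : Type*} [DecidableEq C] (f k m : ℕ)
    (P F : Fin m → Finset C)
    (hP : ∀ j, (P j).card ≤ k) (hF : ∀ j, (F j).card ≤ f)
    (hdisj : ∀ j, P j ∩ F j = ∅)
    (hskew : ∀ j j' : Fin m, j < j' → (P j ∩ F j').Nonempty) :
    m ≤ Nat.choose (f + k) k := by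
  classical
  set inl : C ↪ C ⊕ (Fin m × ℕ) := ⟨Sum.inl, Sum.inl_injective⟩ with hinl
  have hdumP : ∀ j : Fin m,
      Function.Injective (fun i : ℕ => (Sum.inr (j, i) : C ⊕ (Fin m × ℕ))) := by
    intro j a b hab
    simpa using hab
  have hdumF : ∀ j : Fin m,
      Function.Injective (fun i : ℕ => (Sum.inr (j, k + i) : C ⊕ (Fin m × ℕ))) := by
    intro j a b hab
    simpa using hab
  set P' : Fin m → Finset (C ⊕ (Fin m × ℕ)) :=
    fun j => (P j).map inl ∪ (Finset.range (k - (P j).card)).map ⟨_, hdumP j⟩ with hP'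
  set F' : Fin m → Finset (C ⊕ (Fin m × ℕ)) :=
    fun j => (F j).map inl ∪ (Finset.range (f - (F j).card)).map ⟨_, hdumF j⟩ with hF'
  have hdisjmap : ∀ (s : Finset C) (r : ℕ)
      (g : ℕ ↪ C ⊕ (Fin m × ℕ)), (∀ i, ∃ p, g i = Sum.inr p) →
      Disjoint (s.map inl) ((Finset.range r).map g) := by
    intro s r g hg
    refine Finset.disjoint_left.mpr ?_
    rintro a ha hb
    rw [Finset.mem_map] at ha hb
    obtain ⟨c, _, rfl⟩ := ha
    obtain ⟨i, _, h⟩ := hb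
    obtain ⟨p, hp⟩ := hg i
    rw [hp] at h
    simp [hinl] at h
  have hPcard : ∀ j, (P' j).card = k := by
    intro j
    rw [hP']
    rw [Finset.card_union_of_disjoint
      (hdisjmap (P j) _ _ (fun i => ⟨(j, i), rfl⟩)),
      Finset.card_map, Finset.card_map, Finset.card_range]
    have := hP j
    omega
  have hFcard : ∀ j, (F' j).card = f := by
    intro j
    rw [hF']
    rw [Finset.card_union_of_disjoint
      (hdisjmap (F j) _ _ (fun i => ⟨(j, k + i), rfl⟩)),
      Finset.card_map, Finset.card_map, Finset.card_range]
    have := hF j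
    omega
  have hdisj' : ∀ j, P' j ∩ F' j = ∅ := by
    intro j
    rw [Finset.eq_empty_iff_forall_notMem]
    intro a ha
    rw [Finset.mem_inter] at ha
    obtain ⟨h1, h2⟩ := ha
    simp only [hP', hinl, Finset.mem_union, Finset.mem_map,
      Function.Embedding.coeFn_mk, Finset.mem_range] at h1
    simp only [hF', hinl, Finset.mem_union, Finset.mem_map,
      Function.Embedding.coeFn_mk, Finset.mem_range] at h2
    match a with
    | Sum.inl c =>
      have hc1 : c ∈ P j := by
        rcases h1 with ⟨i, hi, hie⟩ | ⟨i, hi, hie⟩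
        · rw [Sum.inl.injEq] at hie
          exact hie ▸ hi
        · exact absurd hie (by simp)
      have hc2 : c ∈ F j := by
        rcases h2 with ⟨i, hi, hie⟩ | ⟨i, hi, hie⟩
        · rw [Sum.inl.injEq] at hie
          exact hie ▸ hi
        · exact absurd hie (by simp)
      have : c ∈ P j ∩ F j := Finset.mem_inter.mpr ⟨hc1, hc2⟩
      rw [hdisj j] at this
      exact absurd this (Finset.notMem_empty c)
    | Sum.inr (j', i) =>
      obtain ⟨i₁, hi₁, hie₁⟩ | ⟨i₁, hi₁, hie₁⟩ := h1
      · exact absurd hie₁ (by simp)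
      obtain ⟨i₂, hi₂, hie₂⟩ | ⟨i₂, hi₂, hie₂⟩ := h2
      · exact absurd hie₂ (by simp)
      rw [Sum.inr.injEq, Prod.mk.injEq] at hie₁ hie₂
      have := hP j
      omega
  have hskew' : ∀ j j' : Fin m, j < j' → (P' j ∩ F' j').Nonempty := by
    intro j j' hlt
    obtain ⟨c, hc⟩ := hskew j j' hlt
    rw [Finset.mem_inter] at hc
    refine ⟨inl c, Finset.mem_inter.mpr ⟨?_, ?_⟩⟩
    · rw [hP']
      exact Finset.mem_union_left _ (Finset.mem_map_of_mem _ hc.1)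
    · rw [hF']
      exact Finset.mem_union_left _ (Finset.mem_map_of_mem _ hc.2)
  exact skew_exact f k m P' F' hPcard hFcard hdisj' hskew'
end

section
/- In the (f,k)-FT game over a universe C with |C| = f + k, the collection 𝒫 = all k-element subsets of C has no proper FT-certificate: for every P ∈ 𝒫, setting F = C \ P (so |F| = f) kills every P' ∈ 𝒫 with P' ≠ P while P ∩ F = ∅. Consequently any sub-collection 𝒫' ⊆ 𝒫 that is an FT-certificate of 𝒫 must equal 𝒫, and hence have size binom(f+k, k). -/
open Finset

/-- An FT-certificate of a collection of subsets of `C` with fault budget `f`. -/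
def IsFTCertificate {C : Type*} [DecidableEq C] (f : ℕ)
    (Psall Ps' : Finset (Finset C)) : Prop :=
  ∀ F : Finset C, F.card ≤ f →
    (∃ P ∈ Psall, P ∩ F = ∅) → ∃ P' ∈ Ps', P' ∩ F = ∅

namespace IsFTCertificate

variable {C : Type*} [Fintype C] [DecidableEq C] {f : ℕ} {Psall Ps' : Finset (Finset C)}
  {P : Finset C}

theorem exists_subset_of_card_compl_le (hcert : IsFTCertificate f Psall Ps')
    (hP : P ∈ Psall) (hPc : Pᶜ.card ≤ f) : ∃ P' ∈ Ps', P' ⊆ P := by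
  obtain ⟨P', hP', hP'F⟩ := hcert Pᶜ hPc ⟨P, hP, inter_compl P⟩
  exact ⟨P', hP', disjoint_compl_right_iff.mp (disjoint_iff_inter_eq_empty.mpr hP'F)⟩

theorem mem_of_card_compl_le (hcert : IsFTCertificate f Psall Ps')
    (hP : P ∈ Psall) (hPc : Pᶜ.card ≤ f) (hcard : ∀ P' ∈ Ps', P.card ≤ P'.card) :
    P ∈ Ps' := by
  obtain ⟨P', hP', hP'P⟩ := hcert.exists_subset_of_card_compl_le hP hPc
  rwa [← eq_of_subset_of_card_le hP'P (hcard P' hP')]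

end IsFTCertificate

/-- The collection of all k-subsets of a universe of size f+k has no proper
FT-certificate. -/
theorem forcing_bob {C : Type*} [Fintype C] [DecidableEq C] (f k : ℕ)
    (hC : Fintype.card C = f + k)
    (Ps' : Finset (Finset C))
    (hsub : Ps' ⊆ Finset.powersetCard k Finset.univ)
    (hcert : IsFTCertificate f (Finset.powersetCard k Finset.univ) Ps') :
    Ps' = Finset.powersetCard k Finset.univ ∧ Ps'.card = Nat.choose (f + k) k := by
  have card_of_mem {P : Finset C} (hP : P ∈ powersetCard k univ) : P.card = k :=
    (mem_powersetCard.mp hP).2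
  have hall : Ps' = powersetCard k univ := by
    refine hsub.antisymm fun P hP => hcert.mem_of_card_compl_le hP ?_ ?_
    · rw [card_compl, card_of_mem hP, hC, Nat.add_sub_cancel]
    · intro P' hP'
      rw [card_of_mem hP, card_of_mem (hsub hP')]
  refine ⟨hall, ?_⟩
  rw [hall, card_powersetCard, card_univ, hC]
end

section
/- With the greedy park certificate strategy (parameters f, k, score sc = (2,1/2)-score), the kept collection 𝒫_i is always an FT-certificate of the collection 𝒫ᵃˡˡ_i of all sets presented so far: for every F ⊆ C with |F| ≤ f, if some P ∈ 𝒫ᵃˡˡ_i satisfies P ∩ F = ∅, then some P' ∈ 𝒫_i satisfies P' ∩ F = ∅. -/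
open Finset

open scoped Classical

/-- The greedy park certificate strategy: starting from ∅, keep the i-th
presented set iff no sub-link of it is already full. -/
noncomputable def greedy {C : Type*} [DecidableEq C] (f : ℕ) (P : ℕ → Finset C) :
    ℕ → Finset (Finset C)
  | 0 => ∅
  | i + 1 =>
      if ∃ J ⊆ P (i + 1), 1 / 2 < scSum 2 (1 / 2) f J (greedy f P i) then
        greedy f P i
      else
        insert (P (i + 1)) (greedy f P i)


/-! The kept collection is a `(2, 1/2)`-park: a set is only added when each `J` it contains
has score at most `1/2`, and the set itself contributes at most `1/2` to that score. If `P_i`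
avoids `F` but is rejected, some `J ⊆ P_i` has score above `1/2`, and `J` avoids `F`. Were
every member of the `J`-link to meet `F`, each such member would split off a factor `(2f)⁻¹`
along a point `c ∈ F`, bounding the `J`-score by
`∑_{c ∈ F} (2f)⁻¹ · sc_{J ∪ {c}} ≤ |F|/(2f) ≤ 1/2`.
So some member of the link avoids `F`, and the kept collections only grow. -/

section Score

variable {C : Type*} [DecidableEq C] {α β : ℝ} {f : ℕ} {J P : Finset C}

lemma sc_of_not_subset (h : ¬J ⊆ P) : sc α β f J P = 0 := if_neg h

lemma sc_nonneg (hα : 0 ≤ α) (hβ : 0 ≤ β) (J P : Finset C) : 0 ≤ sc α β f J P := by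
  unfold sc
  split
  · have : 0 ≤ α * f := by positivity
    positivity
  · exact le_rfl

lemma natCast_zpow_neg_le_one (n m : ℕ) : (n : ℝ) ^ (-(m : ℤ)) ≤ 1 := by
  rw [zpow_neg, zpow_natCast]
  rcases n.eq_zero_or_pos with rfl | hn
  · rcases m with _ | m <;> simp
  · exact inv_le_one_of_one_le₀ (one_le_pow₀ (by exact_mod_cast hn))

lemma sc_two_le (hβ : 0 ≤ β) (J P : Finset C) : sc 2 β f J P ≤ β := by
  unfold sc
  split
  · have h := natCast_zpow_neg_le_one (2 * f) (P \ J).card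
    push_cast at h
    exact mul_le_of_le_one_right hβ h
  · exact hβ

lemma sc_eq_inv_mul_sc_insert {c : C} (hcP : c ∈ P) (hcJ : c ∉ J) :
    sc α β f J P = (α * f)⁻¹ * sc α β f (insert c J) P := by
  by_cases hJP : J ⊆ P
  · have hcard : (P \ J).card = (P \ insert c J).card + 1 := by
      rw [sdiff_insert, card_erase_add_one (mem_sdiff.2 ⟨hcP, hcJ⟩)]
    unfold sc
    rw [if_pos hJP, if_pos (insert_subset hcP hJP), hcard]
    simp only [zpow_neg, zpow_natCast, pow_succ, mul_inv]
    ring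
  · rw [sc_of_not_subset hJP, sc_of_not_subset (fun h => hJP ((subset_insert c J).trans h)),
      mul_zero]

lemma scSum_insert_le (hα : 0 ≤ α) (hβ : 0 ≤ β) (J Q : Finset C) (Ps : Finset (Finset C)) :
    scSum α β f J (insert Q Ps) ≤ sc α β f J Q + scSum α β f J Ps := by
  by_cases hQ : Q ∈ Ps
  · rw [insert_eq_of_mem hQ]
    exact le_add_of_nonneg_left (sc_nonneg hα hβ J Q)
  · exact (sum_insert hQ).le

lemma sc_le_sum_sc_insert (hα : 0 ≤ α) (hβ : 0 ≤ β) {F : Finset C} (hJF : J ∩ F = ∅)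
    (hPF : (P ∩ F).Nonempty) :
    sc α β f J P ≤ ∑ c ∈ F, (α * f)⁻¹ * sc α β f (insert c J) P := by
  obtain ⟨c, hc⟩ := hPF
  obtain ⟨hcP, hcF⟩ := mem_inter.1 hc
  have hcJ : c ∉ J := fun hcJ => notMem_empty c (hJF ▸ mem_inter.2 ⟨hcJ, hcF⟩)
  rw [sc_eq_inv_mul_sc_insert hcP hcJ]
  exact single_le_sum (f := fun c => (α * f)⁻¹ * sc α β f (insert c J) P)
    (fun d _ => mul_nonneg (by positivity) (sc_nonneg hα hβ _ _)) hcF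

theorem IsPark.exists_mem_link_inter_eq_empty (hα : 0 ≤ α) (hβ : 0 ≤ β)
    {Ps : Finset (Finset C)} (hPs : IsPark α β f Ps) {F : Finset C} (hF : F.card ≤ f)
    (hJF : J ∩ F = ∅) (hJ : 1 / α < scSum α β f J Ps) :
    ∃ Q ∈ link Ps J, Q ∩ F = ∅ := by
  by_contra! hlink
  have hsplit : ∀ P ∈ Ps, sc α β f J P ≤ ∑ c ∈ F, (α * f)⁻¹ * sc α β f (insert c J) P := by
    intro P hP
    by_cases hJP : J ⊆ P
    · exact sc_le_sum_sc_insert hα hβ hJF (hlink P (mem_filter.2 ⟨hP, hJP⟩))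
    · rw [sc_of_not_subset hJP]
      exact sum_nonneg fun c _ => mul_nonneg (by positivity) (sc_nonneg hα hβ _ _)
  have hcard : (F.card : ℝ) * (α * f)⁻¹ ≤ 1 / α := by
    rcases f.eq_zero_or_pos with rfl | hf
    · simp [hα]
    calc (F.card : ℝ) * (α * f)⁻¹ ≤ f * (α * f)⁻¹ :=
          mul_le_mul_of_nonneg_right (by exact_mod_cast hF) (by positivity)
      _ = 1 / α := by
          rw [mul_inv, mul_left_comm, mul_inv_cancel₀ (by positivity), mul_one, one_div]
  have : scSum α β f J Ps ≤ 1 / α :=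
    calc scSum α β f J Ps
        ≤ ∑ P ∈ Ps, ∑ c ∈ F, (α * f)⁻¹ * sc α β f (insert c J) P := sum_le_sum hsplit
      _ = ∑ c ∈ F, (α * f)⁻¹ * scSum α β f (insert c J) Ps := by
          rw [sum_comm]; simp only [scSum, mul_sum]
      _ ≤ ∑ c ∈ F, (α * f)⁻¹ :=
          sum_le_sum fun c _ => mul_le_of_le_one_right (by positivity) (hPs _)
      _ = F.card * (α * f)⁻¹ := by rw [sum_const, nsmul_eq_mul]
      _ ≤ 1 / α := hcard
  linarith

end Score

section Greedy

variable {C : Type*} [DecidableEq C] {f : ℕ} {P : ℕ → Finset C}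

lemma greedy_mono : Monotone (greedy f P) := by
  refine monotone_nat_of_le_succ fun i => ?_
  rw [greedy]
  split
  · exact le_rfl
  · exact subset_insert _ _

lemma greedy_isPark (i : ℕ) : IsPark 2 (1 / 2) f (greedy f P i) := by
  induction i with
  | zero => intro J; simp [greedy, scSum]
  | succ i ih =>
    rw [greedy]
    split
    · exact ih
    · next hfree =>
      push Not at hfree
      intro J
      refine (scSum_insert_le zero_le_two (by norm_num) _ _ _).trans ?_
      by_cases hJ : J ⊆ P (i + 1)
      · linarith [sc_two_le (f := f) (by norm_num : (0 : ℝ) ≤ 1 / 2) J (P (i + 1)), hfree J hJ]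
      · rw [sc_of_not_subset hJ, zero_add]
        exact ih J

lemma exists_mem_greedy_succ_inter_eq_empty {F : Finset C} (hF : F.card ≤ f) (i : ℕ)
    (hPF : P (i + 1) ∩ F = ∅) : ∃ Q ∈ greedy f P (i + 1), Q ∩ F = ∅ := by
  rw [greedy]
  split
  · next hfull =>
    obtain ⟨J, hJP, hJ⟩ := hfull
    have hJF : J ∩ F = ∅ := subset_empty.1 (hPF ▸ inter_subset_inter_right hJP)
    obtain ⟨Q, hQ, hQF⟩ := (greedy_isPark i).exists_mem_link_inter_eq_empty zero_le_two
      (by norm_num) hF hJF hJ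
    exact ⟨Q, (mem_filter.1 hQ).1, hQF⟩
  · exact ⟨P (i + 1), mem_insert_self _ _, hPF⟩

end Greedy

theorem greedy_certificate_general {C : Type*} [DecidableEq C] (f : ℕ)
    (P : ℕ → Finset C) (i : ℕ)
    (F : Finset C) (hF : F.card ≤ f)
    (hex : ∃ j, 1 ≤ j ∧ j ≤ i ∧ P j ∩ F = ∅) :
    ∃ Q ∈ greedy f P i, Q ∩ F = ∅ := by
  obtain ⟨j, hj, hji, hPF⟩ := hex
  obtain ⟨j, rfl⟩ := Nat.exists_eq_add_of_le' hj
  obtain ⟨Q, hQ, hQF⟩ := exists_mem_greedy_succ_inter_eq_empty hF j hPF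
  exact ⟨Q, greedy_mono hji hQ, hQF⟩

/-- The greedy strategy maintains an FT-certificate of all sets presented so far. -/
theorem greedy_certificate {C : Type*} [DecidableEq C] (f k : ℕ) (hf : 0 < f)
    (P : ℕ → Finset C) (hk : ∀ i, (P i).card ≤ k) (i : ℕ)
    (F : Finset C) (hF : F.card ≤ f)
    (hex : ∃ j, 1 ≤ j ∧ j ≤ i ∧ P j ∩ F = ∅) :
    ∃ Q ∈ greedy f P i, Q ∩ F = ∅ :=
  greedy_certificate_general f P i F hF hex
end

section
/- Postponed-colors saturate the global park: Let 𝒫 be a park over colors C with respect to an (â, β̂)-score function sc (â = α̂_i f scaling), such that every member set has at most k colors. Suppose C' ⊆ C is a set of colors with |C'| ≥ 2k·α̂·f such that for every c ∈ C', sc_{{c}}(𝒫) > 1/2 (each singleton link is full). Then sc_∅(𝒫) > 1/2. -/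
open Finset

/-- Many full singleton links saturate the empty link of the global park. -/
theorem full_singletons_saturate {C : Type*} [DecidableEq C] (α β : ℝ) (f k : ℕ)
    (hf : 0 < f) (hk : 0 < k) (hα : 1 < α) (hβ0 : 0 < β) (hβ1 : β ≤ 1)
    (Ps : Finset (Finset C)) (hpark : IsPark α β f Ps)
    (hcard : ∀ P ∈ Ps, P.card ≤ k)
    (C' : Finset C) (hC' : 2 * (k : ℝ) * α * (f : ℝ) ≤ (C'.card : ℝ))
    (hfull : ∀ c ∈ C', 1 / 2 < scSum α β f {c} Ps) :
    1 / 2 < scSum α β f ∅ Ps := by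
  set A := α * (f : ℝ) with hA
  have hf1 : (1 : ℝ) ≤ (f : ℝ) := by exact_mod_cast hf
  have hA1 : 1 < A := by nlinarith
  have hA0 : (0 : ℝ) < A := by linarith
  have hsc0 : ∀ P : Finset C, 0 ≤ sc α β f ∅ P := by
    intro P
    simp only [sc, empty_subset, if_true, sdiff_empty]
    positivity
  have hkey : ∀ (c : C) (P : Finset C), c ∈ P →
      sc α β f {c} P = A * sc α β f ∅ P := by
    intro c P hc
    have hsub : {c} ⊆ P := by simpa using hc
    have hcard1 : 1 ≤ P.card := card_pos.mpr ⟨c, hc⟩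
    simp only [sc, if_pos hsub, empty_subset, if_true, sdiff_empty]
    rw [card_sdiff_of_subset hsub, card_singleton]
    have h1 : (((P.card - 1 : ℕ)) : ℤ) = (P.card : ℤ) - 1 := by omega
    rw [h1, neg_sub, sub_eq_add_neg, zpow_add₀ (ne_of_gt hA0), zpow_one]
    ring
  have hzero : ∀ (c : C) (P : Finset C), c ∉ P → sc α β f {c} P = 0 := by
    intro c P hc
    have : ¬ ({c} ⊆ P) := by simpa using hc
    simp [sc, this]
  have hPsum : ∀ P ∈ Ps, ∑ c ∈ C', sc α β f {c} P ≤ (k : ℝ) * A * sc α β f ∅ P := by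
    intro P hP
    have hsubset : C' ∩ P ⊆ C' := inter_subset_left
    have heq : ∑ c ∈ C', sc α β f {c} P = ∑ c ∈ C' ∩ P, sc α β f {c} P := by
      refine (Finset.sum_subset hsubset ?_).symm
      intro c hc hcn
      exact hzero c P (fun h => hcn (mem_inter.mpr ⟨hc, h⟩))
    rw [heq]
    have heq2 : ∑ c ∈ C' ∩ P, sc α β f {c} P
        = ((C' ∩ P).card : ℝ) * (A * sc α β f ∅ P) := by
      rw [Finset.sum_congr rfl (fun c hc => hkey c P (mem_inter.mp hc).2)]
      rw [Finset.sum_const, nsmul_eq_mul]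
    rw [heq2]
    have hle : ((C' ∩ P).card : ℝ) ≤ (k : ℝ) := by
      have := (card_le_card (inter_subset_right : C' ∩ P ⊆ P)).trans (hcard P hP)
      exact_mod_cast this
    have hnn : 0 ≤ A * sc α β f ∅ P := mul_nonneg (le_of_lt hA0) (hsc0 P)
    calc ((C' ∩ P).card : ℝ) * (A * sc α β f ∅ P)
        ≤ (k : ℝ) * (A * sc α β f ∅ P) := mul_le_mul_of_nonneg_right hle hnn
      _ = (k : ℝ) * A * sc α β f ∅ P := by ring
  have hswap : ∑ c ∈ C', scSum α β f {c} Ps ≤ (k : ℝ) * A * scSum α β f ∅ Ps := by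
    unfold scSum
    rw [Finset.sum_comm]
    calc ∑ P ∈ Ps, ∑ c ∈ C', sc α β f {c} P
        ≤ ∑ P ∈ Ps, (k : ℝ) * A * sc α β f ∅ P := Finset.sum_le_sum hPsum
      _ = (k : ℝ) * A * ∑ P ∈ Ps, sc α β f ∅ P := by rw [Finset.mul_sum]
  have hlower : (C'.card : ℝ) * (1 / 2) ≤ ∑ c ∈ C', scSum α β f {c} Ps := by
    calc (C'.card : ℝ) * (1 / 2) = ∑ _c ∈ C', (1 / 2 : ℝ) := by
          rw [Finset.sum_const, nsmul_eq_mul]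
      _ ≤ ∑ c ∈ C', scSum α β f {c} Ps :=
          Finset.sum_le_sum (fun c hc => le_of_lt (hfull c hc))
  have hkA : (0 : ℝ) < (k : ℝ) * A := by
    have : (1 : ℝ) ≤ (k : ℝ) := by exact_mod_cast hk
    nlinarith
  have h2 : (k : ℝ) * A ≤ (C'.card : ℝ) * (1 / 2) := by
    have : 2 * (k : ℝ) * A ≤ (C'.card : ℝ) := by rw [hA]; linarith [hC']
    linarith
  have hfinal : (k : ℝ) * A ≤ (k : ℝ) * A * scSum α β f ∅ Ps := by
    calc (k : ℝ) * A ≤ (C'.card : ℝ) * (1 / 2) := h2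
      _ ≤ ∑ c ∈ C', scSum α β f {c} Ps := hlower
      _ ≤ (k : ℝ) * A * scSum α β f ∅ Ps := hswap
  have : 1 ≤ scSum α β f ∅ Ps := by
    by_contra h
    push_neg at h
    nlinarith
  linarith
end
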